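/- For the Bell-basis model, the evolution map on the Bloch vector of S is affine: there exist a 3×3 real matrix A(t, s₀) and a vector a(t, s₀) (depending on t and on the initial Bloch vector s₀ of ρ_S) such that the Bloch vector of the evolved state equals A(t,s₀) p + a(t,s₀), where p is the Bloch vector of ρ_P; explicitly A and a are given by the formulas (amat) and (ave) in terms of the quantities γ_{ij±kl}(t) = γ_{ij}(t) ± γ_{kl}(t). -/
import Mathlib


open Complex Matrix Kronecker

noncomputable section

def outer {n : Type*} [Fintype n] (v w : n → ℂ) : Matrix n n ℂ :=
  fun x y => v x * (starRingEnd ℂ) (w y)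

def trP (M : Matrix (Fin 2 × Fin 2) (Fin 2 × Fin 2) ℂ) : Matrix (Fin 2) (Fin 2) ℂ :=
  fun x y => ∑ c : Fin 2, M (x, c) (y, c)

def melem {n : Type*} [Fintype n] (M : Matrix n n ℂ) (v w : n → ℂ) : ℂ :=
  ∑ x, ∑ y, (starRingEnd ℂ) (v x) * M x y * w y

def gam {ι : Type*} (α : ι → ℝ) (f φ : ℝ → ℝ) (i j : ι) (t : ℝ) : ℂ :=
  Complex.exp (-(((α i - α j) ^ 2 * f t : ℝ) : ℂ)
    + Complex.I * (((α i ^ 2 - α j ^ 2) * φ t : ℝ) : ℂ))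

/-- The four Bell states built from orthonormal bases {a k}, {b l} of ℂ². -/
def bell (a b : Fin 2 → Fin 2 → ℂ) : Fin 4 → (Fin 2 × Fin 2 → ℂ)
  | 0 => fun q => (a 0 q.1 * b 0 q.2 + a 1 q.1 * b 1 q.2) / Real.sqrt 2
  | 1 => fun q => (a 0 q.1 * b 0 q.2 - a 1 q.1 * b 1 q.2) / Real.sqrt 2
  | 2 => fun q => (a 0 q.1 * b 1 q.2 + a 1 q.1 * b 0 q.2) / Real.sqrt 2
  | 3 => fun q => (a 0 q.1 * b 1 q.2 - a 1 q.1 * b 0 q.2) / Real.sqrt 2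

-- AUX
def tp (u w : Fin 2 → ℂ) : Fin 2 × Fin 2 → ℂ := fun q => u q.1 * w q.2

lemma bell_zero (a b : Fin 2 → Fin 2 → ℂ) :
    bell a b 0 = (((Real.sqrt 2)⁻¹ : ℝ) : ℂ) • (tp (a 0) (b 0) + tp (a 1) (b 1)) := by
  funext q
  simp [bell, tp, Pi.add_apply, Pi.smul_apply, smul_eq_mul, div_eq_inv_mul,
    Complex.ofReal_inv]

lemma bell_one (a b : Fin 2 → Fin 2 → ℂ) :
    bell a b 1 = (((Real.sqrt 2)⁻¹ : ℝ) : ℂ) • (tp (a 0) (b 0) - tp (a 1) (b 1)) := by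
  funext q
  simp [bell, tp, Pi.sub_apply, Pi.smul_apply, smul_eq_mul, div_eq_inv_mul,
    Complex.ofReal_inv]

lemma bell_two (a b : Fin 2 → Fin 2 → ℂ) :
    bell a b 2 = (((Real.sqrt 2)⁻¹ : ℝ) : ℂ) • (tp (a 0) (b 1) + tp (a 1) (b 0)) := by
  funext q
  simp [bell, tp, Pi.add_apply, Pi.smul_apply, smul_eq_mul, div_eq_inv_mul,
    Complex.ofReal_inv]

lemma bell_three (a b : Fin 2 → Fin 2 → ℂ) :
    bell a b 3 = (((Real.sqrt 2)⁻¹ : ℝ) : ℂ) • (tp (a 0) (b 1) - tp (a 1) (b 0)) := by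
  funext q
  simp [bell, tp, Pi.sub_apply, Pi.smul_apply, smul_eq_mul, div_eq_inv_mul,
    Complex.ofReal_inv]

-- melem lemmas
lemma melem_add {n : Type*} [Fintype n] (M N : Matrix n n ℂ) (v w : n → ℂ) :
    melem (M + N) v w = melem M v w + melem N v w := by
  simp [melem, Matrix.add_apply, mul_add, add_mul, Finset.sum_add_distrib]

lemma melem_smul {n : Type*} [Fintype n] (c : ℂ) (M : Matrix n n ℂ) (v w : n → ℂ) :
    melem (c • M) v w = c * melem M v w := by
  simp [melem, Matrix.smul_apply, Finset.mul_sum, smul_eq_mul]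
  congr 1; funext x; congr 1; funext y; ring

lemma melem_vadd {n : Type*} [Fintype n] (M : Matrix n n ℂ) (v1 v2 w : n → ℂ) :
    melem M (v1 + v2) w = melem M v1 w + melem M v2 w := by
  simp [melem, Pi.add_apply, map_add, add_mul, Finset.sum_add_distrib]

lemma melem_vsub {n : Type*} [Fintype n] (M : Matrix n n ℂ) (v1 v2 w : n → ℂ) :
    melem M (v1 - v2) w = melem M v1 w - melem M v2 w := by
  simp [melem, Pi.sub_apply, map_sub, sub_mul, Finset.sum_sub_distrib]

lemma melem_vsmul {n : Type*} [Fintype n] (M : Matrix n n ℂ) (c : ℂ) (v w : n → ℂ) :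
    melem M (c • v) w = (starRingEnd ℂ) c * melem M v w := by
  simp [melem, Pi.smul_apply, smul_eq_mul, _root_.map_mul, Finset.mul_sum]
  congr 1; funext x; congr 1; funext y; ring

lemma melem_wadd {n : Type*} [Fintype n] (M : Matrix n n ℂ) (v w1 w2 : n → ℂ) :
    melem M v (w1 + w2) = melem M v w1 + melem M v w2 := by
  simp [melem, Pi.add_apply, mul_add, Finset.sum_add_distrib]

lemma melem_wsub {n : Type*} [Fintype n] (M : Matrix n n ℂ) (v w1 w2 : n → ℂ) :
    melem M v (w1 - w2) = melem M v w1 - melem M v w2 := by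
  simp [melem, Pi.sub_apply, mul_sub, Finset.sum_sub_distrib]

lemma melem_wsmul {n : Type*} [Fintype n] (M : Matrix n n ℂ) (c : ℂ) (v w : n → ℂ) :
    melem M v (c • w) = c * melem M v w := by
  simp [melem, Pi.smul_apply, smul_eq_mul, Finset.mul_sum]
  congr 1; funext x; congr 1; funext y; ring

-- outer lemmas
lemma outer_vadd {n : Type*} [Fintype n] (v1 v2 w : n → ℂ) :
    outer (v1 + v2) w = outer v1 w + outer v2 w := by
  ext x y; simp [outer, add_mul]

lemma outer_vsub {n : Type*} [Fintype n] (v1 v2 w : n → ℂ) :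
    outer (v1 - v2) w = outer v1 w - outer v2 w := by
  ext x y; simp [outer, sub_mul]

lemma outer_vsmul {n : Type*} [Fintype n] (c : ℂ) (v w : n → ℂ) :
    outer (c • v) w = c • outer v w := by
  ext x y; simp [outer, smul_eq_mul]; ring

lemma outer_wadd {n : Type*} [Fintype n] (v w1 w2 : n → ℂ) :
    outer v (w1 + w2) = outer v w1 + outer v w2 := by
  ext x y; simp [outer, mul_add]

lemma outer_wsub {n : Type*} [Fintype n] (v w1 w2 : n → ℂ) :
    outer v (w1 - w2) = outer v w1 - outer v w2 := by
  ext x y; simp [outer, mul_sub]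

lemma outer_wsmul {n : Type*} [Fintype n] (c : ℂ) (v w : n → ℂ) :
    outer v (c • w) = (starRingEnd ℂ) c • outer v w := by
  ext x y; simp [outer, smul_eq_mul, _root_.map_mul]; ring

-- trP lemmas
lemma trP_add (M N : Matrix (Fin 2 × Fin 2) (Fin 2 × Fin 2) ℂ) :
    trP (M + N) = trP M + trP N := by
  ext x y; simp [trP, Finset.sum_add_distrib]

lemma trP_sub (M N : Matrix (Fin 2 × Fin 2) (Fin 2 × Fin 2) ℂ) :
    trP (M - N) = trP M - trP N := by
  ext x y; simp [trP, Finset.sum_sub_distrib]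

lemma trP_smul (c : ℂ) (M : Matrix (Fin 2 × Fin 2) (Fin 2 × Fin 2) ℂ) :
    trP (c • M) = c • trP M := by
  ext x y; simp [trP, Finset.mul_sum, mul_add]

-- key structural lemmas
lemma melem_outer (u u' v w : Fin 2 → ℂ) :
    melem (outer u u') v w
      = (∑ x, (starRingEnd ℂ) (v x) * u x) * (∑ y, (starRingEnd ℂ) (u' y) * w y) := by
  simp [melem, outer, Fin.sum_univ_two]; ring

lemma melem_kron (M N : Matrix (Fin 2) (Fin 2) ℂ) (u w u' w' : Fin 2 → ℂ) :
    melem (M ⊗ₖ N) (tp u w) (tp u' w') = melem M u u' * melem N w w' := by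
  simp [melem, tp, Matrix.kroneckerMap_apply, Fintype.sum_prod_type, Fin.sum_univ_two,
    _root_.map_mul]
  ring

lemma trP_outer_tp (u w u' w' : Fin 2 → ℂ) :
    trP (outer (tp u w) (tp u' w'))
      = (starRingEnd ℂ) (∑ c, (starRingEnd ℂ) (w c) * w' c) • outer u u' := by
  ext x y
  simp [trP, outer, tp, Fin.sum_univ_two, Matrix.smul_apply, map_add, _root_.map_mul,
    smul_eq_mul]
  ring

lemma gam_self {ι : Type*} (α : ι → ℝ) (f φ : ℝ → ℝ) (i : ι) (t : ℝ) :
    gam α f φ i i t = 1 := by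
  simp [gam]

lemma gam_conj {ι : Type*} (α : ι → ℝ) (f φ : ℝ → ℝ) (i j : ι) (t : ℝ) :
    gam α f φ j i t = (starRingEnd ℂ) (gam α f φ i j t) := by
  rw [gam, gam, ← Complex.exp_conj]
  congr 1
  simp [map_add, map_neg, _root_.map_mul, Complex.conj_ofReal, Complex.conj_I]
  ring

lemma melem_sub {n : Type*} [Fintype n] (M N : Matrix n n ℂ) (v w : n → ℂ) :
    melem (M - N) v w = melem M v w - melem N v w := by
  simp [melem, Matrix.sub_apply, mul_sub, sub_mul, Finset.sum_sub_distrib]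

lemma melem_zero {n : Type*} [Fintype n] (v w : n → ℂ) :
    melem (0 : Matrix n n ℂ) v w = 0 := by
  simp [melem]

lemma melem_neg {n : Type*} [Fintype n] (M : Matrix n n ℂ) (v w : n → ℂ) :
    melem (-M) v w = - melem M v w := by
  simp [melem, Matrix.neg_apply, Finset.sum_neg_distrib]

lemma hr2 : ((Real.sqrt 2)⁻¹ : ℝ) ^ 2 = 1/2 := by
  rw [inv_pow, Real.sq_sqrt (by norm_num : (0:ℝ) ≤ 2)]; norm_num

lemma hr4 : ((Real.sqrt 2)⁻¹ : ℝ) ^ 4 = 1/4 := by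
  have h : Real.sqrt 2 ^ 2 = 2 := Real.sq_sqrt (by norm_num)
  rw [inv_pow, show (4:ℕ) = 2*2 from rfl, pow_mul, h]; norm_num


/-- The state (I + s·σ)/2 written in the orthonormal basis {v k}, s the Bloch vector. -/
def blochState (v : Fin 2 → Fin 2 → ℂ) (s : Fin 3 → ℝ) : Matrix (Fin 2) (Fin 2) ℂ :=
  (((1 + s 2) / 2 : ℝ) : ℂ) • outer (v 0) (v 0)
    + ((((s 0 : ℝ) : ℂ) - Complex.I * (s 1 : ℝ)) / 2) • outer (v 0) (v 1)
    + ((((s 0 : ℝ) : ℂ) + Complex.I * (s 1 : ℝ)) / 2) • outer (v 1) (v 0)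
    + (((1 - s 2) / 2 : ℝ) : ℂ) • outer (v 1) (v 1)

/-- The Bloch vector of a 2×2 matrix M, read in the orthonormal basis {v k}. -/
def blochOf (v : Fin 2 → Fin 2 → ℂ) (M : Matrix (Fin 2) (Fin 2) ℂ) : Fin 3 → ℝ :=
  ![(melem M (v 0) (v 1) + melem M (v 1) (v 0)).re,
    (Complex.I * (melem M (v 0) (v 1) - melem M (v 1) (v 0))).re,
    (melem M (v 0) (v 0) - melem M (v 1) (v 1)).re]

set_option maxHeartbeats 2000000 in
/-- In the Bell-basis model the evolution of the Bloch vector of S is affine in the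
Bloch vector p of the probe: s(t) = A(t,s₀) p + a(t,s₀), with A and a given by the
explicit formulas (amat) and (ave). -/
theorem stmt5 (a b : Fin 2 → Fin 2 → ℂ)
    (ha : ∀ k m, (∑ x, (starRingEnd ℂ) (a k x) * a m x) = if k = m then 1 else 0)
    (hb : ∀ k m, (∑ x, (starRingEnd ℂ) (b k x) * b m x) = if k = m then 1 else 0)
    (α : Fin 4 → ℝ) (f φ : ℝ → ℝ) (hf : ∀ t, 0 ≤ f t)
    (s p : Fin 3 → ℝ) (hs : (∑ i, s i ^ 2) ≤ 1) (hp : (∑ i, p i ^ 2) ≤ 1) :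
    ∀ t : ℝ,
      blochOf a
        (∑ i : Fin 4, ∑ j : Fin 4,
          (melem (blochState a s ⊗ₖ blochState b p) (bell a b i) (bell a b j)
              * gam α f φ i j t)
            • trP (outer (bell a b i) (bell a b j)))
      = ((1 / 2 : ℝ) • !![(Complex.I * (gam α f φ 0 2 t - gam α f φ 1 3 t)).im,
            (((s 2 : ℝ) : ℂ) * (gam α f φ 0 2 t - gam α f φ 1 3 t)).im,
            (((s 1 : ℝ) : ℂ) * (gam α f φ 0 2 t + gam α f φ 1 3 t)).im;
          (((s 2 : ℝ) : ℂ) * (gam α f φ 0 3 t - gam α f φ 1 2 t)).im,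
            (Complex.I * (gam α f φ 1 2 t - gam α f φ 0 3 t)).im,
            (-(((s 0 : ℝ) : ℂ)) * (gam α f φ 1 2 t + gam α f φ 0 3 t)).im;
          (-(((s 1 : ℝ) : ℂ)) * (gam α f φ 0 1 t + gam α f φ 2 3 t)).im,
            (((s 0 : ℝ) : ℂ) * (gam α f φ 2 3 t - gam α f φ 0 1 t)).im,
            (Complex.I * (gam α f φ 0 1 t - gam α f φ 2 3 t)).im]) *ᵥ p
        + (1 / 2 : ℝ) • ![(((s 0 : ℝ) : ℂ) * (gam α f φ 0 2 t + gam α f φ 1 3 t)).re,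
            (((s 1 : ℝ) : ℂ) * (gam α f φ 1 2 t + gam α f φ 0 3 t)).re,
            (((s 2 : ℝ) : ℂ) * (gam α f φ 0 1 t + gam α f φ 2 3 t)).re] := by
  intro t
  funext r
  fin_cases r
  all_goals
    simp only [blochOf, Fin.sum_univ_four, melem_add, melem_smul,
      bell_zero, bell_one, bell_two, bell_three, blochState,
      Matrix.add_kronecker, Matrix.kronecker_add, Matrix.smul_kronecker,
      Matrix.kronecker_smul,
      melem_vadd, melem_vsub, melem_vsmul, melem_wadd, melem_wsub, melem_wsmul,
      outer_vadd, outer_vsub, outer_vsmul, outer_wadd, outer_wsub, outer_wsmul,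
      trP_add, trP_sub, trP_smul, trP_outer_tp, melem_kron, melem_outer,
      ha, hb, gam_self, Complex.conj_ofReal, apply_ite, _root_.map_one, _root_.map_zero,
      Matrix.cons_val_zero, Matrix.cons_val_one, Matrix.head_cons,
      Matrix.cons_val_two, Matrix.tail_cons,
      Matrix.mulVec, dotProduct, Fin.sum_univ_three, Matrix.smul_apply,
      Pi.add_apply, Pi.smul_apply, smul_eq_mul, Matrix.cons_val', Matrix.of_apply,
      Matrix.empty_val', Matrix.cons_val_fin_one, Matrix.head_fin_const,
      Fin.reduceFinMk, Fin.zero_eta, Fin.mk_one,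
      melem_sub, melem_zero,
      show ((0:Fin 2) = 1) ↔ False from by decide,
      show ((1:Fin 2) = 0) ↔ False from by decide, if_true, if_false,
      ite_true, ite_false, mul_zero, zero_mul, mul_one, one_mul, add_zero, zero_add,
      sub_zero, zero_sub, neg_zero, neg_neg, one_smul, zero_smul, melem_neg]
    simp only [gam_conj α f φ 0 1 t, gam_conj α f φ 0 2 t, gam_conj α f φ 0 3 t,
      gam_conj α f φ 1 2 t, gam_conj α f φ 1 3 t, gam_conj α f φ 2 3 t]
    simp only [Complex.add_re, Complex.add_im, Complex.sub_re, Complex.sub_im,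
      Complex.mul_re, Complex.mul_im, Complex.neg_re, Complex.neg_im,
      Complex.I_re, Complex.I_im, Complex.one_re, Complex.one_im,
      Complex.ofReal_re, Complex.ofReal_im, Complex.conj_re, Complex.conj_im,
      Complex.div_ofNat_re, Complex.div_ofNat_im]
    ring_nf
    simp only [hr4]
    ring
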